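/- Let (Ω₂,ℙ₂) be a probability space, let U, W : [0,1] × [0,1] × Ω₂ → ℝ be P-variables ([0,1] with Lebesgue measure), let Ũ, W̃ be the associated probability graphons, and let f₁,…,f_k be the indicator functions of a measurable partition of [0,1]. For every ε > 0 there exists δ > 0 such that if d_□(Ũ,W̃) < δ, then d_LP(S(f₁,…,f_k,W), S(f₁,…,f_k,U)) < ε. -/

import Mathlib

set_option autoImplicit false

open MeasureTheory Set
open scoped ENNReal NNReal

noncomputable section

/-- `ℝ^n` with the Euclidean metric. -/
abbrev RE (n : ℕ) : Type := EuclideanSpace ℝ (Fin n)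

/-- The random vector `(f₁(x₁), f₁(x₂), …, f_k(x₁), f_k(x₂), W(x₁,x₂,x₁₂))`. -/
def sVec {Ω₁ Ω₂ : Type*} (k : ℕ) (f : Fin k → Ω₁ → ℝ)
    (W : Ω₁ × Ω₁ × Ω₂ → ℝ) (x : Ω₁ × Ω₁ × Ω₂) : RE (2 * k + 1) :=
  (WithLp.equiv 2 (Fin (2 * k + 1) → ℝ)).symm fun i =>
    if _ : (i : ℕ) < 2 * k then
      if (i : ℕ) % 2 = 0 then f ⟨(i : ℕ) / 2, by omega⟩ x.1
      else f ⟨(i : ℕ) / 2, by omega⟩ x.2.1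
    else W x

/-- `S(f₁,…,f_k,W)`: the pushforward of the product measure `P₁ ⊗ P₁ ⊗ P₂` under `sVec`. -/
def Smeasure {Ω₁ Ω₂ : Type*} [MeasurableSpace Ω₁] [MeasurableSpace Ω₂]
    (P₁ : Measure Ω₁) (P₂ : Measure Ω₂) {k : ℕ} (f : Fin k → Ω₁ → ℝ)
    (W : Ω₁ × Ω₁ × Ω₂ → ℝ) : Measure (RE (2 * k + 1)) :=
  (P₁.prod (P₁.prod P₂)).map (sVec k f W)

/-- The `k`-profile `S_k(W)`. -/
def SkSet {Ω₁ Ω₂ : Type*} [MeasurableSpace Ω₁] [MeasurableSpace Ω₂]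
    (P₁ : Measure Ω₁) (P₂ : Measure Ω₂) (k : ℕ)
    (W : Ω₁ × Ω₁ × Ω₂ → ℝ) : Set (Measure (RE (2 * k + 1))) :=
  {μ | ∃ f : Fin k → Ω₁ → ℝ, (∀ i, Measurable (f i)) ∧
    (∀ i x, f i x ∈ Icc (-1 : ℝ) 1) ∧ μ = Smeasure P₁ P₂ f W}

/-- A function partition: `{0,1}`-valued measurable functions summing to `1`. -/
def IsFunctionPartition {Ω₁ : Type*} [MeasurableSpace Ω₁] {k : ℕ}
    (f : Fin k → Ω₁ → ℝ) : Prop :=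
  (∀ i, Measurable (f i)) ∧ (∀ i x, f i x = 0 ∨ f i x = 1) ∧ ∀ x, ∑ i, f i x = 1

/-- The restricted `k`-profile `S'_k(W)`. -/
def SkSet' {Ω₁ Ω₂ : Type*} [MeasurableSpace Ω₁] [MeasurableSpace Ω₂]
    (P₁ : Measure Ω₁) (P₂ : Measure Ω₂) (k : ℕ)
    (W : Ω₁ × Ω₁ × Ω₂ → ℝ) : Set (Measure (RE (2 * k + 1))) :=
  {μ | ∃ f : Fin k → Ω₁ → ℝ, IsFunctionPartition f ∧ μ = Smeasure P₁ P₂ f W}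

/-- Hausdorff edistance (w.r.t. the Lévy–Prokhorov distance) between sets of measures. -/
def eHausLP {X : Type*} [MeasurableSpace X] [PseudoEMetricSpace X]
    (A B : Set (Measure X)) : ℝ≥0∞ :=
  max (⨆ μ ∈ A, ⨅ ν ∈ B, levyProkhorovEDist μ ν)
      (⨆ ν ∈ B, ⨅ μ ∈ A, levyProkhorovEDist μ ν)

/-- Hausdorff distance (w.r.t. the Lévy–Prokhorov distance) between sets of measures. -/
def dHLP {X : Type*} [MeasurableSpace X] [PseudoEMetricSpace X]
    (A B : Set (Measure X)) : ℝ := (eHausLP A B).toReal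

/-- A `P`-variable: a measurable real-valued function on a product `Ω₁ × Ω₁ × Ω₂`
of probability spaces. -/
structure PVar where
  (Ω₁ : Type*)
  (Ω₂ : Type*)
  [m₁ : MeasurableSpace Ω₁]
  [m₂ : MeasurableSpace Ω₂]
  (P₁ : Measure Ω₁)
  (P₂ : Measure Ω₂)
  (prob₁ : IsProbabilityMeasure P₁)
  (prob₂ : IsProbabilityMeasure P₂)
  (W : Ω₁ × Ω₁ × Ω₂ → ℝ)
  (meas : Measurable W)

attribute [instance] PVar.m₁ PVar.m₂

/-- The underlying product probability measure of a `P`-variable. -/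
def PVar.vol (V : PVar) : Measure (V.Ω₁ × V.Ω₁ × V.Ω₂) := V.P₁.prod (V.P₁.prod V.P₂)

/-- The `k`-profile of a `P`-variable. -/
def PVar.Sk (V : PVar) (k : ℕ) : Set (Measure (RE (2 * k + 1))) := SkSet V.P₁ V.P₂ k V.W

/-- The restricted `k`-profile of a `P`-variable. -/
def PVar.Sk' (V : PVar) (k : ℕ) : Set (Measure (RE (2 * k + 1))) := SkSet' V.P₁ V.P₂ k V.W

/-- The `P`-variables metric `d_M`. -/
def dM (V U : PVar) : ℝ :=
  ∑' k : ℕ, (2 : ℝ)⁻¹ ^ (k + 1) * dHLP (V.Sk (k + 1)) (U.Sk (k + 1))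


/-- The probability graphon (Markov kernel `[0,1]² → 𝒫(ℝ)`) associated to a
P-variable on `[0,1] × [0,1] × Ω₂`: `W̃(x₁,x₂;·)` is the law of `W(x₁,x₂,·)`. -/
def assocGraphon {Ω₂ : Type*} [MeasurableSpace Ω₂] (P₂ : Measure Ω₂)
    (W : unitInterval × unitInterval × Ω₂ → ℝ)
    (x : unitInterval × unitInterval) : Measure ℝ :=
  P₂.map fun ω => W (x.1, x.2, ω)

/-- `W̃(A;·) = ∫_A W̃(x,y;·) dx dy` for measurable `A ⊆ [0,1]²`. -/
def graphonInt (K : unitInterval × unitInterval → Measure ℝ)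
    (A : Set (unitInterval × unitInterval)) : Measure ℝ :=
  (((volume : Measure unitInterval).prod volume).restrict A).bind K

/-- The cut semidistance `d_□` between two probability graphons on `[0,1]`:
`sup_{S,T} d_LP(K(S×T;·), L(S×T;·))` over measurable `S, T ⊆ [0,1]`. -/
def cutDistKer (K L : unitInterval × unitInterval → Measure ℝ) : ℝ :=
  ⨆ p : {S : Set unitInterval // MeasurableSet S} ×
        {T : Set unitInterval // MeasurableSet T},
    levyProkhorovDist (graphonInt K (p.1.1 ×ˢ p.2.1)) (graphonInt L (p.1.1 ×ˢ p.2.1))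

/-- The unlabelled cut distance `δ_□`: infimum of `d_□(K, L∘(φ×φ))` over
Lebesgue-measure-preserving bijections `φ` of `[0,1]`. -/
def unlabCutDist (K L : unitInterval × unitInterval → Measure ℝ) : ℝ :=
  ⨅ φ : {φ : unitInterval ≃ᵐ unitInterval //
          MeasurePreserving φ (volume : Measure unitInterval) volume},
    cutDistKer K fun x => L (φ.1 x.1, φ.1 x.2)

/-- A P-variable on `[0,1] × [0,1] × Ω₂` (with Lebesgue measure on `[0,1]`),
bundled as a `PVar`. -/
def PVar.ofUnitInterval {Ω₂ : Type*} [MeasurableSpace Ω₂] (P₂ : Measure Ω₂)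
    [h₂ : IsProbabilityMeasure P₂] (W : unitInterval × unitInterval × Ω₂ → ℝ)
    (hW : Measurable W) : PVar :=
  ⟨unitInterval, Ω₂, (volume : Measure unitInterval), P₂, inferInstance, h₂, W, hW⟩

/-! On the cell `P i × P j` of the partition, `sVec` is `(eᵢ, eⱼ, W)` with `eᵢ` the `i`-th unit
vector, so `S(f, W)` is the sum over the `k²` cells of the pushforwards of `W̃(P i × P j; ·)`
under the isometric embedding `t ↦ (eᵢ, eⱼ, t)` of `ℝ` into `ℝ^{2k+1}`. Isometries do not increase
Lévy–Prokhorov distances and errors add up over finite sums, so if all the cell measures of `Ũ`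
and `W̃` are `δ`-close (which `d_□(Ũ, W̃) < δ` gives), then `S(f, U)` and `S(f, W)` are
`max(δ, k²δ)`-close. -/

open Metric

lemma LipschitzWith.thickening_preimage_subset {X Y : Type*} [PseudoEMetricSpace X]
    [PseudoEMetricSpace Y] {f : X → Y} (hf : LipschitzWith 1 f) (δ : ℝ) (B : Set Y) :
    thickening δ (f ⁻¹' B) ⊆ f ⁻¹' thickening δ B := by
  intro x hx
  obtain ⟨z, hz, hxz⟩ := (mem_thickening_iff_exists_edist_lt _ _).1 hx
  refine (mem_thickening_iff_exists_edist_lt _ _).2 ⟨f z, hz, ?_⟩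
  simpa using (hf.edist_le_mul x z).trans_lt (by simpa using hxz)

section LevyProkhorov

variable {ι X Y : Type*} [MeasurableSpace X] [PseudoEMetricSpace X]
  [MeasurableSpace Y] [PseudoEMetricSpace Y]

lemma levyProkhorovEDist_le_max_of_forall {μ ν : Measure Y} {r s : ℝ≥0∞}
    (hμν : ∀ B, MeasurableSet B → μ B ≤ ν (thickening r.toReal B) + s)
    (hνμ : ∀ B, MeasurableSet B → ν B ≤ μ (thickening r.toReal B) + s) :
    levyProkhorovEDist μ ν ≤ max r s := by
  refine levyProkhorovEDist_le_of_forall _ _ _ fun η B hη hη_top hB => ?_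
  have hr : r.toReal ≤ η.toReal :=
    ENNReal.toReal_mono hη_top.ne ((le_max_left r s).trans hη.le)
  have hs : s ≤ η := (le_max_right r s).trans hη.le
  exact ⟨(hμν B hB).trans (add_le_add (measure_mono (thickening_mono hr B)) hs),
    (hνμ B hB).trans (add_le_add (measure_mono (thickening_mono hr B)) hs)⟩

variable [Fintype ι] [OpensMeasurableSpace Y] {e : ι → X → Y} {μ ν : ι → Measure X}
  {δ : ℝ≥0∞}

lemma sum_map_apply_le_of_levyProkhorovEDist_lt (he : ∀ i, LipschitzWith 1 (e i))
    (he_meas : ∀ i, Measurable (e i)) (h : ∀ i, levyProkhorovEDist (μ i) (ν i) < δ)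
    {B : Set Y} (hB : MeasurableSet B) :
    (∑ i, (μ i).map (e i)) B
      ≤ (∑ i, (ν i).map (e i)) (thickening δ.toReal B) + Fintype.card ι * δ := by
  have hBδ : MeasurableSet (thickening δ.toReal B) := isOpen_thickening.measurableSet
  simp only [Measure.finsetSum_apply, Measure.map_apply (he_meas _) hB,
    Measure.map_apply (he_meas _) hBδ, ← Finset.card_univ, ← nsmul_eq_mul,
    ← Finset.sum_const, ← Finset.sum_add_distrib]
  refine Finset.sum_le_sum fun i _ => ?_
  exact (left_measure_le_of_levyProkhorovEDist_lt (h i) (he_meas i hB)).trans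
    (add_le_add_left (measure_mono ((he i).thickening_preimage_subset _ _)) _)

lemma levyProkhorovEDist_sum_map_le (he : ∀ i, LipschitzWith 1 (e i))
    (he_meas : ∀ i, Measurable (e i)) (h : ∀ i, levyProkhorovEDist (μ i) (ν i) < δ) :
    levyProkhorovEDist (∑ i, (μ i).map (e i)) (∑ i, (ν i).map (e i))
      ≤ max δ (Fintype.card ι * δ) :=
  levyProkhorovEDist_le_max_of_forall
    (fun _ hB => sum_map_apply_le_of_levyProkhorovEDist_lt he he_meas h hB)
    (fun _ hB => sum_map_apply_le_of_levyProkhorovEDist_lt he he_meas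
      (fun i => levyProkhorovEDist_comm (μ i) (ν i) ▸ h i) hB)

end LevyProkhorov

/-- The vector `(a₁, b₁, …, a_k, b_k, t)`. -/
def interleavedVec {k : ℕ} (a b : Fin k → ℝ) (t : ℝ) : RE (2 * k + 1) :=
  (WithLp.equiv 2 (Fin (2 * k + 1) → ℝ)).symm fun m =>
    if _ : (m : ℕ) < 2 * k then
      if (m : ℕ) % 2 = 0 then a ⟨(m : ℕ) / 2, by omega⟩ else b ⟨(m : ℕ) / 2, by omega⟩
    else t

lemma sVec_eq_interleavedVec {Ω₁ Ω₂ : Type*} {k : ℕ} (f : Fin k → Ω₁ → ℝ)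
    (W : Ω₁ × Ω₁ × Ω₂ → ℝ) (x : Ω₁ × Ω₁ × Ω₂) :
    sVec k f W x = interleavedVec (fun i => f i x.1) (fun i => f i x.2.1) (W x) :=
  rfl

lemma isometry_interleavedVec {k : ℕ} (a b : Fin k → ℝ) : Isometry (interleavedVec a b) := by
  refine Isometry.of_dist_eq fun t s => ?_
  rw [EuclideanSpace.dist_eq, Finset.sum_eq_single (Fin.last (2 * k))]
  · simp [interleavedVec, Real.sqrt_sq_eq_abs, Real.dist_eq]
  · intro m _ hm
    have : (m : ℕ) < 2 * k := by simpa using Fin.val_lt_last hm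
    simp [interleavedVec, this]
  · simp

lemma measurable_sVec {Ω₁ Ω₂ : Type*} [MeasurableSpace Ω₁] [MeasurableSpace Ω₂]
    {k : ℕ} {f : Fin k → Ω₁ → ℝ} {W : Ω₁ × Ω₁ × Ω₂ → ℝ}
    (hf : ∀ i, Measurable (f i)) (hW : Measurable W) : Measurable (sVec k f W) := by
  refine (MeasurableEquiv.toLp 2 (Fin (2 * k + 1) → ℝ)).measurable.comp
    (measurable_pi_lambda _ fun m => ?_)
  split_ifs
  · exact (hf _).comp measurable_fst
  · exact (hf _).comp (measurable_fst.comp measurable_snd)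
  · exact hW

lemma indicator_one_eq_single_of_mem {ι α M : Type*} [DecidableEq ι] [Zero M] [One M]
    {P : ι → Set α} (hP : Pairwise (Function.onFun Disjoint P)) {i : ι} {x : α} (hx : x ∈ P i) :
    (fun m => (P m).indicator (fun _ => (1 : M)) x) = Pi.single i 1 := by
  funext m
  by_cases hm : m = i
  · subst hm
    simp [hx]
  · simp [hm, indicator_of_notMem ((hP hm).notMem_of_mem_right hx)]

lemma MeasureTheory.Measure.map_bind {α β γ : Type*} [MeasurableSpace α] [MeasurableSpace β]
    [MeasurableSpace γ] (m : Measure α) {f : α → Measure β} (hf : Measurable f) {g : β → γ}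
    (hg : Measurable g) : (m.bind f).map g = m.bind fun x => (f x).map g := by
  have hfg : Measurable fun x => (f x).map g := (Measure.measurable_map g hg).comp hf
  ext s hs
  rw [Measure.map_apply hg hs, Measure.bind_apply (hg hs) hf.aemeasurable,
    Measure.bind_apply hs hfg.aemeasurable]
  simp only [Measure.map_apply hg hs]

section Graphon

variable {Ω₂ : Type*} [MeasurableSpace Ω₂] (P₂ : Measure Ω₂)
  {U W : unitInterval × unitInterval × Ω₂ → ℝ}

lemma assocGraphon_eq_map_prodMk (hW : Measurable W) (x : unitInterval × unitInterval) :
    assocGraphon P₂ W x = (P₂.map (Prod.mk x)).map (W ∘ MeasurableEquiv.prodAssoc) := by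
  rw [Measure.map_map (hW.comp MeasurableEquiv.prodAssoc.measurable) measurable_prodMk_left]
  rfl

lemma graphonInt_prod_eq_map [SFinite P₂] (hW : Measurable W) (A B : Set unitInterval) :
    graphonInt (assocGraphon P₂ W) (A ×ˢ B)
      = ((volume.prod (volume.prod P₂)).restrict (A ×ˢ B ×ˢ univ)).map W := by
  have hassoc : MeasurableEquiv.prodAssoc ⁻¹' (A ×ˢ B ×ˢ (univ : Set Ω₂)) = (A ×ˢ B) ×ˢ univ :=
    Equiv.prod_assoc_preimage
  have hrestrict := Measure.prod_restrict (μ := (volume : Measure unitInterval).prod volume)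
    (ν := P₂) (A ×ˢ B) univ
  rw [Measure.restrict_univ] at hrestrict
  rw [graphonInt, funext (assocGraphon_eq_map_prodMk P₂ hW), ← Measure.map_bind _
    Measurable.map_prodMk_left (hW.comp MeasurableEquiv.prodAssoc.measurable),
    ← Measure.prodAssoc_prod, MeasurableEquiv.prodAssoc.measurableEmbedding.restrict_map,
    hassoc, ← hrestrict, Measure.map_map hW MeasurableEquiv.prodAssoc.measurable]
  simp only [Measure.prod]

lemma Smeasure_indicator_eq_sum [SFinite P₂] (hW : Measurable W) {k : ℕ}
    {P : Fin k → Set unitInterval} (hPm : ∀ i, MeasurableSet (P i))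
    (hPd : Pairwise (Function.onFun Disjoint P)) (hPu : ⋃ i, P i = univ) :
    Smeasure volume P₂ (fun i => (P i).indicator fun _ => (1 : ℝ)) W
      = ∑ p : Fin k × Fin k, (graphonInt (assocGraphon P₂ W) (P p.1 ×ˢ P p.2)).map
          (interleavedVec (Pi.single p.1 1) (Pi.single p.2 1)) := by
  set C : Fin k × Fin k → Set (unitInterval × unitInterval × Ω₂) :=
    fun p => P p.1 ×ˢ P p.2 ×ˢ univ
  have hCm : ∀ p, MeasurableSet (C p) := fun p => (hPm p.1).prod ((hPm p.2).prod .univ)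
  have hCu : ⋃ p, C p = univ := by
    refine eq_univ_of_forall fun x => mem_iUnion.2 ?_
    obtain ⟨i, hi⟩ := mem_iUnion.1 (hPu ▸ mem_univ x.1)
    obtain ⟨j, hj⟩ := mem_iUnion.1 (hPu ▸ mem_univ x.2.1)
    exact ⟨(i, j), hi, hj, mem_univ _⟩
  have hCd : Pairwise (Function.onFun Disjoint C) := by
    intro p q hpq
    simp only [Function.onFun, C, disjoint_prod]
    by_cases h₁ : p.1 = q.1
    · exact .inr (.inl (hPd fun h₂ => hpq (Prod.ext h₁ h₂)))
    · exact .inl (hPd h₁)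
  set f : Fin k → unitInterval → ℝ := fun i => (P i).indicator fun _ => 1
  have hsVec : Measurable (sVec k f W) :=
    measurable_sVec (fun i => measurable_const.indicator (hPm i)) hW
  have hsVec_eq : ∀ p, ∀ x ∈ C p, sVec k f W x
      = interleavedVec (Pi.single p.1 1) (Pi.single p.2 1) (W x) := by
    rintro p x ⟨hx₁, hx₂, -⟩
    rw [sVec_eq_interleavedVec, indicator_one_eq_single_of_mem hPd hx₁,
      indicator_one_eq_single_of_mem hPd hx₂]
  rw [Smeasure, ← Measure.restrict_univ (μ := volume.prod _), ← hCu,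
    Measure.restrict_iUnion hCd hCm, Measure.sum_fintype,
    Measure.map_finset_sum' hsVec.aemeasurable]
  refine Finset.sum_congr rfl fun p _ => ?_
  rw [graphonInt_prod_eq_map P₂ hW, Measure.map_map
    (isometry_interleavedVec _ _).continuous.measurable hW]
  exact Measure.map_congr (ae_restrict_of_forall_mem (hCm p) (hsVec_eq p))

variable [IsProbabilityMeasure P₂]

lemma graphonInt_prod_apply_univ_le_one (hW : Measurable W) (A B : Set unitInterval) :
    graphonInt (assocGraphon P₂ W) (A ×ˢ B) univ ≤ 1 := by
  rw [graphonInt_prod_eq_map P₂ hW, Measure.map_apply hW MeasurableSet.univ, preimage_univ,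
    Measure.restrict_apply_univ]
  exact prob_le_one

lemma levyProkhorovEDist_graphonInt_le_one (hU : Measurable U) (hW : Measurable W)
    (A B : Set unitInterval) :
    levyProkhorovEDist (graphonInt (assocGraphon P₂ U) (A ×ˢ B))
      (graphonInt (assocGraphon P₂ W) (A ×ˢ B)) ≤ 1 :=
  (levyProkhorovEDist_le_max_measure_univ _ _).trans
    (max_le (graphonInt_prod_apply_univ_le_one P₂ hU A B)
      (graphonInt_prod_apply_univ_le_one P₂ hW A B))

lemma levyProkhorovEDist_graphonInt_le_cutDistKer (hU : Measurable U) (hW : Measurable W)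
    {S T : Set unitInterval} (hS : MeasurableSet S) (hT : MeasurableSet T) :
    levyProkhorovEDist (graphonInt (assocGraphon P₂ U) (S ×ˢ T))
        (graphonInt (assocGraphon P₂ W) (S ×ˢ T))
      ≤ ENNReal.ofReal (cutDistKer (assocGraphon P₂ U) (assocGraphon P₂ W)) := by
  have hbdd : BddAbove (range fun p : {S : Set unitInterval // MeasurableSet S} ×
      {T : Set unitInterval // MeasurableSet T} =>
      levyProkhorovDist (graphonInt (assocGraphon P₂ U) (p.1.1 ×ˢ p.2.1))
        (graphonInt (assocGraphon P₂ W) (p.1.1 ×ˢ p.2.1))) := by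
    refine ⟨1, ?_⟩
    rintro _ ⟨p, rfl⟩
    exact ENNReal.toReal_le_of_le_ofReal zero_le_one
      (by simpa using levyProkhorovEDist_graphonInt_le_one P₂ hU hW p.1.1 p.2.1)
  rw [← ENNReal.ofReal_toReal (ne_top_of_le_ne_top ENNReal.one_ne_top
    (levyProkhorovEDist_graphonInt_le_one P₂ hU hW S T))]
  exact ENNReal.ofReal_le_ofReal (le_ciSup hbdd (⟨⟨S, hS⟩, ⟨T, hT⟩⟩ :
    {S : Set unitInterval // MeasurableSet S} × {T : Set unitInterval // MeasurableSet T}))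

end Graphon

theorem levyProkhorov_S_lt_of_cutDist_lt_general
    {Ω₂ : Type*} [MeasurableSpace Ω₂] (P₂ : Measure Ω₂) [IsProbabilityMeasure P₂]
    (U W : unitInterval × unitInterval × Ω₂ → ℝ)
    (hU : Measurable U) (hW : Measurable W)
    (k : ℕ)
    (P : Fin k → Set unitInterval) (hPm : ∀ i, MeasurableSet (P i))
    (hPd : Pairwise (Function.onFun Disjoint P)) (hPu : (⋃ i, P i) = univ) :
    ∀ ε > (0 : ℝ), ∃ δ > (0 : ℝ),
      cutDistKer (assocGraphon P₂ U) (assocGraphon P₂ W) < δ →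
      levyProkhorovDist
        (Smeasure (volume : Measure unitInterval) P₂
          (fun i => (P i).indicator fun _ => (1 : ℝ)) W)
        (Smeasure (volume : Measure unitInterval) P₂
          (fun i => (P i).indicator fun _ => (1 : ℝ)) U) < ε := by
  intro ε hε
  set δ := ε / (k * k + 2) with hδ_def
  have hδ : 0 < δ := by positivity
  refine ⟨δ, hδ, fun hcut => ?_⟩
  have hcell : ∀ p : Fin k × Fin k,
      levyProkhorovEDist (graphonInt (assocGraphon P₂ W) (P p.1 ×ˢ P p.2))
        (graphonInt (assocGraphon P₂ U) (P p.1 ×ˢ P p.2)) < ENNReal.ofReal δ := fun p => by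
    rw [levyProkhorovEDist_comm]
    exact (levyProkhorovEDist_graphonInt_le_cutDistKer P₂ hU hW (hPm p.1) (hPm p.2)).trans_lt
      ((ENNReal.ofReal_lt_ofReal_iff hδ).2 hcut)
  have hS := levyProkhorovEDist_sum_map_le
    (e := fun p : Fin k × Fin k => interleavedVec (Pi.single p.1 1) (Pi.single p.2 1))
    (fun p => (isometry_interleavedVec _ _).lipschitz)
    (fun p => (isometry_interleavedVec _ _).continuous.measurable) hcell
  rw [← Smeasure_indicator_eq_sum P₂ hW hPm hPd hPu, ← Smeasure_indicator_eq_sum P₂ hU hPm hPd hPu,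
    Fintype.card_prod, Fintype.card_fin, ← ENNReal.ofReal_natCast,
    ← ENNReal.ofReal_mul (by positivity), ← ENNReal.ofReal_max] at hS
  refine ENNReal.toReal_lt_of_lt_ofReal (hS.trans_lt ((ENNReal.ofReal_lt_ofReal_iff hε).2 ?_))
  have hk : (0 : ℝ) ≤ k * k := by positivity
  refine max_lt (div_lt_self hε (by linarith)) ?_
  rw [hδ_def, Nat.cast_mul, mul_div_assoc', div_lt_iff₀ (by positivity)]
  linarith

/-- Let `U, W` be P-variables on `[0,1] × [0,1] × Ω₂` with associated
probability graphons `Ũ, W̃`, and let `f₁, …, f_k` be the indicator functions of a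
measurable partition of `[0,1]`.  For every `ε > 0` there is a `δ > 0` such that
`d_□(Ũ, W̃) < δ` implies `d_LP(S(f₁,…,f_k,W), S(f₁,…,f_k,U)) < ε`. -/
theorem levyProkhorov_S_lt_of_cutDist_lt
    {Ω₂ : Type*} [MeasurableSpace Ω₂] (P₂ : Measure Ω₂) [IsProbabilityMeasure P₂]
    (U W : unitInterval × unitInterval × Ω₂ → ℝ)
    (hU : Measurable U) (hW : Measurable W)
    (k : ℕ) (hk : 1 ≤ k)
    (P : Fin k → Set unitInterval) (hPm : ∀ i, MeasurableSet (P i))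
    (hPd : Pairwise (Function.onFun Disjoint P)) (hPu : (⋃ i, P i) = univ) :
    ∀ ε > (0 : ℝ), ∃ δ > (0 : ℝ),
      cutDistKer (assocGraphon P₂ U) (assocGraphon P₂ W) < δ →
      levyProkhorovDist
        (Smeasure (volume : Measure unitInterval) P₂
          (fun i => (P i).indicator fun _ => (1 : ℝ)) W)
        (Smeasure (volume : Measure unitInterval) P₂
          (fun i => (P i).indicator fun _ => (1 : ℝ)) U) < ε :=
  levyProkhorov_S_lt_of_cutDist_lt_general P₂ U W hU hW k P hPm hPd hPu

end
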